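/- arXiv:2205.14846 — 3 statements merged into one kernel-verified Lean document; each statement's English description precedes it below -/
import Mathlib

section
/- Let g_I(x) = C_{d,r} ∏_{i∈I} x_i with I ⊆ {1,...,d}, |I| = r, normalized so that ∫ g_I² dσ = 1. If I and J are disjoint subsets of {1,...,d} each of cardinality r, then |∫_{S^{d-1}} g_I(x)² g_J(x)² dσ(x) − 1| ≤ C_r / d for a constant C_r depending only on r. -/
open MeasureTheory Metric

/-- The normalized (probability) uniform measure on the unit sphere `S^{d-1} ⊆ ℝ^d`. -/
noncomputable def uniformSphere (d : ℕ) :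
    Measure (sphere (0 : EuclideanSpace ℝ (Fin d)) 1) :=
  ((volume : Measure (EuclideanSpace ℝ (Fin d))).toSphere Set.univ)⁻¹ •
    (volume : Measure (EuclideanSpace ℝ (Fin d))).toSphere

/-- The normalized monomial `g_I(x) = C_{d,r} ∏_{i∈I} x_i`, where the constant `C_{d,r}`
is chosen so that `∫ g_I² dσ = 1`. -/
noncomputable def normMonomial (d : ℕ) (I : Finset (Fin d))
    (x : sphere (0 : EuclideanSpace ℝ (Fin d)) 1) : ℝ :=
  (∫ y : sphere (0 : EuclideanSpace ℝ (Fin d)) 1,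
      ∏ i ∈ I, ((y : EuclideanSpace ℝ (Fin d)) i) ^ 2 ∂(uniformSphere d)) ^ (-(1 / 2 : ℝ)) *
    ∏ i ∈ I, (x : EuclideanSpace ℝ (Fin d)) i

/-! Integrating `∏_{i∈S} x_i² e^{-‖x‖²}` over `ℝ^d` once coordinatewise and once in polar
coordinates gives the classical moments `∫ ∏_{i∈S} x_i² dσ = 1 / (d (d+2) ⋯ (d+2|S|-2))`.
For disjoint `I, J` of size `r`, `g_I² g_J²` is a multiple of the monomial on `I ∪ J`, so the
integral equals `∏_{k<r} (d+2k)/(d+2r+2k)`, a product of `r` factors in `[1 - 2r/d, 1]`;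
hence `C_r = 2r²` works. -/

open Real Set

lemma integral_Ioi_pow_mul_exp_neg_sq (n : ℕ) :
    ∫ x in Ioi (0 : ℝ), x ^ n * exp (-x ^ 2) = Gamma ((n + 1) / 2) / 2 := by
  have h := integral_rpow_mul_exp_neg_rpow two_pos (neg_one_lt_zero.trans_le (Nat.cast_nonneg n))
  rw [one_div_mul_eq_div] at h
  rw [← h]
  refine setIntegral_congr_fun measurableSet_Ioi fun x _ => ?_
  norm_cast

lemma integral_even_pow_mul_exp_neg_sq (m : ℕ) :
    ∫ x : ℝ, x ^ (2 * m) * exp (-x ^ 2) = Gamma (m + 1 / 2) := by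
  have habs : ∀ x : ℝ, x ^ (2 * m) * exp (-x ^ 2) = |x| ^ (2 * m) * exp (-|x| ^ 2) := fun x => by
    simp [pow_mul]
  rw [integral_congr_ae (.of_forall habs),
    integral_comp_abs (f := fun x => x ^ (2 * m) * exp (-x ^ 2)), integral_Ioi_pow_mul_exp_neg_sq]
  push_cast
  ring_nf

lemma integral_prod_sq_mul_exp_neg_norm_sq {ι : Type*} [Fintype ι] (S : Finset ι) :
    ∫ x : EuclideanSpace ℝ ι, (∏ i ∈ S, x i ^ 2) * exp (-‖x‖ ^ 2)
      = Gamma (1 / 2) ^ Fintype.card ι / 2 ^ S.card := by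
  classical
  have hfactor : ∀ x : ι → ℝ, (∏ i ∈ S, x i ^ 2) * exp (-‖WithLp.toLp 2 x‖ ^ 2)
      = ∏ i, x i ^ (2 * if i ∈ S then 1 else 0) * exp (-x i ^ 2) := by
    intro x
    rw [EuclideanSpace.norm_sq_eq, Finset.prod_mul_distrib, ← exp_sum, ← Finset.sum_neg_distrib,
      ← Finset.prod_subset (Finset.subset_univ S) (fun i _ hi => by simp [hi])]
    simp +contextual
  have hmoment : ∀ i, ∫ t : ℝ, t ^ (2 * if i ∈ S then 1 else 0) * exp (-t ^ 2)
      = Gamma (1 / 2) * if i ∈ S then 1 / 2 else 1 := by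
    intro i
    rw [integral_even_pow_mul_exp_neg_sq]
    split_ifs
    · rw [Nat.cast_one, add_comm, Gamma_add_one (by norm_num)]; ring
    · simp
  rw [← (EuclideanSpace.volume_preserving_symm_measurableEquiv_toLp ι).symm.integral_comp
    (MeasurableEquiv.measurableEmbedding _)]
  simp only [MeasurableEquiv.symm_symm, MeasurableEquiv.toLp_apply, hfactor, WithLp.ofLp_toLp]
  rw [volume_pi, integral_fintype_prod_eq_prod (f := fun i t =>
    t ^ (2 * if i ∈ S then 1 else 0) * exp (-t ^ 2))]
  simp only [hmoment, Finset.prod_mul_distrib, Finset.prod_const, Finset.card_univ,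
    Finset.prod_ite_mem, Finset.univ_inter, one_div, inv_pow]
  ring

lemma integral_volumeIoiPow (n : ℕ) (g : ℝ → ℝ) :
    ∫ t, g t ∂Measure.volumeIoiPow n = ∫ t in Ioi (0 : ℝ), t ^ n * g t := by
  rw [Measure.volumeIoiPow, integral_withDensity_eq_integral_toReal_smul
      (measurable_subtype_coe.pow_const _).ennreal_ofReal
      (.of_forall fun _ => ENNReal.ofReal_lt_top),
    ← integral_subtype_comap measurableSet_Ioi fun t => t ^ n * g t]
  refine integral_congr_ae (.of_forall fun t => ?_)
  simp [ENNReal.toReal_ofReal (pow_nonneg t.2.out.le n)]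

section Polar

variable {E : Type*} [NormedAddCommGroup E] [NormedSpace ℝ E] [FiniteDimensional ℝ E]
  [Nontrivial E] [MeasurableSpace E] [BorelSpace E] (μ : Measure E) [μ.IsAddHaarMeasure]

lemma integral_homogeneous_mul_fun_norm {f : E → ℝ} {n : ℕ}
    (hf : ∀ y ∈ sphere (0 : E) 1, ∀ t : ℝ, 0 < t → f (t • y) = t ^ n * f y) (h : ℝ → ℝ) :
    ∫ x, f x * h ‖x‖ ∂μ
      = (∫ y, f y ∂μ.toSphere) * ∫ t in Ioi (0 : ℝ), t ^ (Module.finrank ℝ E - 1 + n) * h t := by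
  set F : E → ℝ := fun x => f x * h ‖x‖
  have hpolar := (μ.measurePreserving_homeomorphUnitSphereProd).integral_comp
    (Homeomorph.measurableEmbedding _) fun z => F ((homeomorphUnitSphereProd E).symm z)
  simp only [Homeomorph.symm_apply_apply, homeomorphUnitSphereProd_symm_apply_coe] at hpolar
  calc ∫ x, F x ∂μ
      = ∫ z : sphere (0 : E) 1 × Ioi (0 : ℝ), F ((z.2 : ℝ) • (z.1 : E))
          ∂(μ.toSphere.prod (Measure.volumeIoiPow (Module.finrank ℝ E - 1))) := by
        rw [← hpolar, integral_subtype_comap (measurableSet_singleton 0).compl,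
          restrict_compl_singleton]
    _ = ∫ z : sphere (0 : E) 1 × Ioi (0 : ℝ), f z.1 * ((z.2 : ℝ) ^ n * h z.2)
          ∂(μ.toSphere.prod (Measure.volumeIoiPow (Module.finrank ℝ E - 1))) := by
        refine integral_congr_ae (.of_forall fun z => ?_)
        simp only [F, hf z.1 z.1.2 z.2 z.2.2, norm_smul, norm_eq_of_mem_sphere z.1, mul_one,
          Real.norm_eq_abs, abs_of_pos (mem_Ioi.1 z.2.2)]
        ring
    _ = _ := by
        rw [integral_prod_mul (f := fun y : sphere (0 : E) 1 => f y)
          (g := fun t : Ioi (0 : ℝ) => (t : ℝ) ^ n * h t),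
          integral_volumeIoiPow _ fun t => t ^ n * h t]
        simp only [pow_add, mul_assoc]

end Polar

lemma integral_prod_sq_toSphere {d : ℕ} (hd : 0 < d) (S : Finset (Fin d)) :
    ∫ y : sphere (0 : EuclideanSpace ℝ (Fin d)) 1, ∏ i ∈ S, (y : EuclideanSpace ℝ (Fin d)) i ^ 2
        ∂(volume : Measure (EuclideanSpace ℝ (Fin d))).toSphere
      = 2 * Gamma (1 / 2) ^ d / (2 ^ S.card * Gamma (d / 2 + S.card)) := by
  have : Nontrivial (EuclideanSpace ℝ (Fin d)) := by
    have : Nonempty (Fin d) := ⟨⟨0, hd⟩⟩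
    infer_instance
  have hpolar := integral_homogeneous_mul_fun_norm volume
    (f := fun x : EuclideanSpace ℝ (Fin d) => ∏ i ∈ S, x i ^ 2) (n := 2 * S.card)
    (fun y _ t _ => by simp [mul_pow, Finset.prod_mul_distrib, pow_mul]) fun t => exp (-t ^ 2)
  have hradial : ((Module.finrank ℝ (EuclideanSpace ℝ (Fin d)) - 1 + 2 * S.card : ℕ) + 1 : ℝ) / 2
      = d / 2 + S.card := by
    rw [finrank_euclideanSpace_fin]
    push_cast [Nat.cast_sub hd]
    ring
  have hΓ : 0 < Gamma (d / 2 + S.card) := Gamma_pos_of_pos (by positivity)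
  rw [integral_prod_sq_mul_exp_neg_norm_sq, Fintype.card_fin, integral_Ioi_pow_mul_exp_neg_sq,
    hradial] at hpolar
  rw [div_eq_iff (by positivity)] at hpolar
  rw [eq_div_iff (by positivity)]
  linear_combination -2 * hpolar

noncomputable def sphereMoment (d : ℕ) (S : Finset (Fin d)) : ℝ :=
  ∫ y : sphere (0 : EuclideanSpace ℝ (Fin d)) 1, ∏ i ∈ S, (y : EuclideanSpace ℝ (Fin d)) i ^ 2
    ∂uniformSphere d

lemma sphereMoment_eq_Gamma {d : ℕ} (hd : 0 < d) (S : Finset (Fin d)) :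
    sphereMoment d S = Gamma (d / 2) / (2 ^ S.card * Gamma (d / 2 + S.card)) := by
  -- the total mass of `volume.toSphere` is the case `S = ∅`
  have hmass := integral_prod_sq_toSphere hd ∅
  simp only [Finset.prod_empty, integral_const, smul_eq_mul, mul_one, Finset.card_empty,
    pow_zero, one_mul, Nat.cast_zero, add_zero] at hmass
  rw [sphereMoment, uniformSphere, integral_smul_measure, ENNReal.toReal_inv, ← measureReal_def,
    hmass, integral_prod_sq_toSphere hd, smul_eq_mul]
  have hΓ : 0 < Gamma (d / 2) := Gamma_pos_of_pos (by positivity)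
  have hΓ' : 0 < Gamma (1 / 2) := Gamma_pos_of_pos (by positivity)
  field_simp

lemma Real.Gamma_add_nat_eq_mul_prod {x : ℝ} (hx : 0 < x) (n : ℕ) :
    Gamma (x + n) = Gamma x * ∏ k ∈ Finset.range n, (x + k) := by
  induction n with
  | zero => simp
  | succ n ih =>
    rw [Nat.cast_succ, ← add_assoc, Gamma_add_one (by positivity), ih, Finset.prod_range_succ]
    ring

lemma sphereMoment_eq_inv_prod {d : ℕ} (hd : 0 < d) (S : Finset (Fin d)) :
    sphereMoment d S = (∏ k ∈ Finset.range S.card, ((d : ℝ) + 2 * k))⁻¹ := by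
  have hΓ : 0 < Gamma (d / 2) := Gamma_pos_of_pos (by positivity)
  have hprod : ∏ k ∈ Finset.range S.card, ((d : ℝ) + 2 * k)
      = 2 ^ S.card * ∏ k ∈ Finset.range S.card, ((d : ℝ) / 2 + k) := by
    rw [Finset.prod_congr rfl fun k _ => (by ring : (d : ℝ) + 2 * (k : ℕ) = 2 * (d / 2 + k)),
      Finset.prod_mul_distrib, Finset.prod_const, Finset.card_range]
  rw [sphereMoment_eq_Gamma hd, Gamma_add_nat_eq_mul_prod (by positivity), hprod]
  field_simp

lemma sphereMoment_nonneg (d : ℕ) (S : Finset (Fin d)) : 0 ≤ sphereMoment d S :=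
  integral_nonneg fun _ => Finset.prod_nonneg fun _ _ => sq_nonneg _

lemma normMonomial_sq (d : ℕ) (I : Finset (Fin d))
    (x : sphere (0 : EuclideanSpace ℝ (Fin d)) 1) :
    normMonomial d I x ^ 2
      = (∏ i ∈ I, (x : EuclideanSpace ℝ (Fin d)) i ^ 2) / sphereMoment d I := by
  have hpow : (sphereMoment d I ^ (-(1 / 2 : ℝ))) ^ 2 = (sphereMoment d I)⁻¹ := by
    rw [← rpow_natCast, ← rpow_mul (sphereMoment_nonneg d I)]
    norm_num [rpow_neg_one]
  rw [normMonomial, ← sphereMoment, mul_pow, hpow, Finset.prod_pow, inv_mul_eq_div]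

lemma integral_normMonomial_sq_mul_sq {d : ℕ} {I J : Finset (Fin d)} (hIJ : Disjoint I J) :
    ∫ x, normMonomial d I x ^ 2 * normMonomial d J x ^ 2 ∂uniformSphere d
      = sphereMoment d (I ∪ J) / (sphereMoment d I * sphereMoment d J) := by
  simp only [normMonomial_sq, div_mul_div_comm, ← Finset.prod_union hIJ]
  exact integral_div _ _

lemma sphereMoment_union_div_mul {d r : ℕ} (hd : 0 < d) {I J : Finset (Fin d)}
    (hIJ : Disjoint I J) (hI : I.card = r) (hJ : J.card = r) :
    sphereMoment d (I ∪ J) / (sphereMoment d I * sphereMoment d J)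
      = ∏ k ∈ Finset.range r, ((d : ℝ) + 2 * k) / (d + 2 * r + 2 * k) := by
  have hpos : 0 < ∏ k ∈ Finset.range r, ((d : ℝ) + 2 * k) :=
    Finset.prod_pos fun k _ => by positivity
  rw [sphereMoment_eq_inv_prod hd, sphereMoment_eq_inv_prod hd, sphereMoment_eq_inv_prod hd,
    Finset.card_union_of_disjoint hIJ, hI, hJ, Finset.prod_range_add, Finset.prod_div_distrib]
  field_simp
  exact Finset.prod_congr rfl fun k _ => by push_cast; ring

lemma Finset.one_sub_prod_le_sum_one_sub {ι R : Type*} [CommRing R] [LinearOrder R]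
    [IsStrictOrderedRing R] {s : Finset ι} {t : ι → R} (h0 : ∀ i ∈ s, 0 ≤ t i) (h1 : ∀ i ∈ s, t i ≤ 1) :
    1 - ∏ i ∈ s, t i ≤ ∑ i ∈ s, (1 - t i) := by
  induction s using Finset.cons_induction with
  | empty => simp
  | cons a s _ ih =>
    simp only [Finset.mem_cons, forall_eq_or_imp] at h0 h1
    have hP := Finset.prod_le_one h0.2 h1.2
    rw [Finset.prod_cons, Finset.sum_cons]
    nlinarith [ih h0.2 h1.2]

lemma abs_prod_div_sub_one_le {x : ℝ} (hx : 0 < x) (r : ℕ) :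
    |∏ k ∈ Finset.range r, (x + 2 * k) / (x + 2 * r + 2 * k) - 1| ≤ 2 * r ^ 2 / x := by
  set t : ℕ → ℝ := fun k => (x + 2 * k) / (x + 2 * r + 2 * k)
  have ht0 : ∀ k ∈ Finset.range r, 0 ≤ t k := fun k _ => by positivity
  have ht1 : ∀ k ∈ Finset.range r, t k ≤ 1 := fun k _ =>
    div_le_one_of_le₀ (by linarith [(Nat.cast_nonneg r : (0 : ℝ) ≤ r)]) (by positivity)
  have hgap : ∀ k ∈ Finset.range r, 1 - t k ≤ 2 * r / x := fun k _ => by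
    have hden : x ≤ x + 2 * r + 2 * k := by
      linarith [(r.cast_nonneg : (0 : ℝ) ≤ r), (k.cast_nonneg : (0 : ℝ) ≤ k)]
    rw [show 1 - t k = 2 * r / (x + 2 * r + 2 * k) by simp only [t]; field_simp; ring]
    exact div_le_div_of_nonneg_left (by positivity) hx hden
  rw [abs_sub_comm, abs_of_nonneg (sub_nonneg.2 (Finset.prod_le_one ht0 ht1))]
  calc 1 - ∏ k ∈ Finset.range r, t k
      ≤ ∑ k ∈ Finset.range r, (1 - t k) := Finset.one_sub_prod_le_sum_one_sub ht0 ht1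
    _ ≤ ∑ _k ∈ Finset.range r, 2 * r / x := Finset.sum_le_sum hgap
    _ = 2 * r ^ 2 / x := by rw [Finset.sum_const, Finset.card_range, nsmul_eq_mul]; ring

/-- If `I, J ⊆ {1,...,d}` are disjoint sets of cardinality `r`, then
`|∫ g_I² g_J² dσ − 1| ≤ C_r / d` for a constant `C_r` depending only on `r`. -/
theorem normMonomial_sq_decorrelation (r : ℕ) :
    ∃ C : ℝ, ∀ d : ℕ, 0 < d → ∀ I J : Finset (Fin d), I.card = r → J.card = r → Disjoint I J →
      |(∫ x : sphere (0 : EuclideanSpace ℝ (Fin d)) 1,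
          (normMonomial d I x) ^ 2 * (normMonomial d J x) ^ 2 ∂(uniformSphere d)) - 1|
        ≤ C / d := by
  refine ⟨2 * r ^ 2, fun d hd I J hI hJ hIJ => ?_⟩
  rw [integral_normMonomial_sq_mul_sq hIJ, sphereMoment_union_div_mul hd hIJ hI hJ]
  exact abs_prod_div_sub_one_le (Nat.cast_pos.2 hd) r
end

section
/- For b, c > 0, ∫_0^1 √(t(1-t)) / ((t+b)²(t+c)) dt = π / (2√(b²+b) · ((b + c + 2bc) + 2√((b+1)(c+1) b c))). -/
/-!
Write `w = √(t(1-t))` and `s = √(a² + a)`. On `(0, 1)` the function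
`arccos ((a - (2a+1)t) / (t + a))` has derivative `s / ((t + a) w)` and climbs from `0` to
`π`, `arccos (1 - 2t)` has derivative `1 / w` and climbs from `0` to `π`, and `w / (t + a)ⁿ`
vanishes at both ends. Expanding `t(1-t) = -(t+a)² + (2a+1)(t+a) - s²` turns each of
`w / (t + a)ⁿ`, `n = 1, 2, 3`, into a combination of these derivatives, which gives its
integral in closed form. For `b ≠ c`, partial fractions reduce the theorem to `n = 1, 2`, and
the answer collapses to the stated form because `(b + c + 2bc)² - 4(b² + b)(c² + c) = (c - b)²`;
for `b = c` it is the case `n = 3`.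
-/

open Real Set intervalIntegral

lemma hasDerivAt_sqrt_mul_one_sub {t : ℝ} (h0 : 0 < t) (h1 : t < 1) :
    HasDerivAt (fun x => √(x * (1 - x))) ((1 - 2 * t) / (2 * √(t * (1 - t)))) t := by
  have h : HasDerivAt (fun x : ℝ => x * (1 - x)) (1 - 2 * t) t := by
    refine ((hasDerivAt_id' t).fun_mul
      ((hasDerivAt_const t 1).fun_sub (hasDerivAt_id' t))).congr_deriv ?_
    ring
  exact h.sqrt (by nlinarith)

lemma hasDerivAt_sqrt_mul_one_sub_div_pow {a t : ℝ} (n : ℕ) (h0 : 0 < t) (h1 : t < 1)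
    (ha : t + a ≠ 0) :
    HasDerivAt (fun x => √(x * (1 - x)) / (x + a) ^ n)
      (((1 - 2 * t) * (t + a) - 2 * n * (t * (1 - t))) /
        (2 * √(t * (1 - t)) * (t + a) ^ (n + 1))) t := by
  have hw : 0 < √(t * (1 - t)) := sqrt_pos.2 (by nlinarith)
  have hw2 := sq_sqrt (by nlinarith : 0 ≤ t * (1 - t))
  refine ((hasDerivAt_sqrt_mul_one_sub h0 h1).fun_div
    (((hasDerivAt_id' t).add_const a).fun_pow n) (pow_ne_zero _ ha)).congr_deriv ?_
  generalize √(t * (1 - t)) = w at *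
  rw [← hw2]
  rcases n with _ | n
  · simp [mul_div_mul_right _ _ ha]
  · rw [Nat.add_sub_cancel]
    field_simp
    ring

lemma hasDerivAt_arccos_one_sub_two_mul {t : ℝ} (h0 : 0 < t) (h1 : t < 1) :
    HasDerivAt (fun x => arccos (1 - 2 * x)) (1 / √(t * (1 - t))) t := by
  have hv : HasDerivAt (fun x : ℝ => 1 - 2 * x) (-2) t := by
    simpa using ((hasDerivAt_id' t).const_mul 2).const_sub 1
  refine ((hasDerivAt_arccos (by linarith) (by linarith)).comp t hv).congr_deriv ?_
  have hsq : 1 - (1 - 2 * t) ^ 2 = (2 * √(t * (1 - t))) ^ 2 := by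
    rw [mul_pow, sq_sqrt (by nlinarith)]; ring
  have hw : 0 < √(t * (1 - t)) := sqrt_pos.2 (by nlinarith)
  rw [hsq, sqrt_sq (by positivity)]
  field_simp

lemma hasDerivAt_arccos_sub_mul_div_add {a t : ℝ} (ha : 0 < a) (h0 : 0 < t) (h1 : t < 1) :
    HasDerivAt (fun x => arccos ((a - (2 * a + 1) * x) / (x + a)))
      (√(a ^ 2 + a) / ((t + a) * √(t * (1 - t)))) t := by
  have hta : 0 < t + a := by linarith
  have hv : HasDerivAt (fun x => (a - (2 * a + 1) * x) / (x + a))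
      (-2 * (a ^ 2 + a) / (t + a) ^ 2) t := by
    refine (((hasDerivAt_id' t).const_mul (2 * a + 1)).const_sub a |>.fun_div
      ((hasDerivAt_id' t).add_const a) hta.ne').congr_deriv ?_
    field_simp
    ring
  have hne1 : (a - (2 * a + 1) * t) / (t + a) ≠ -1 := by
    rw [ne_eq, div_eq_iff hta.ne']; nlinarith
  have hne2 : (a - (2 * a + 1) * t) / (t + a) ≠ 1 := by
    rw [ne_eq, div_eq_iff hta.ne']; nlinarith
  refine ((hasDerivAt_arccos hne1 hne2).comp t hv).congr_deriv ?_
  have hw : 0 < √(t * (1 - t)) := sqrt_pos.2 (by nlinarith)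
  have hs : 0 < √(a ^ 2 + a) := sqrt_pos.2 (by positivity)
  have hw2 := sq_sqrt (by nlinarith : 0 ≤ t * (1 - t))
  have hs2 := sq_sqrt (by positivity : 0 ≤ a ^ 2 + a)
  have hsq : 1 - ((a - (2 * a + 1) * t) / (t + a)) ^ 2
      = (2 * √(a ^ 2 + a) * √(t * (1 - t)) / (t + a)) ^ 2 := by
    rw [div_pow, div_pow, mul_pow, mul_pow, hs2, hw2]
    field_simp; ring
  rw [hsq, sqrt_sq (by positivity)]
  generalize √(a ^ 2 + a) = s at *
  rw [← hs2]
  field_simp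

lemma arccos_sub_mul_div_add_zero {a : ℝ} (ha : a ≠ 0) :
    arccos ((a - (2 * a + 1) * 0) / (0 + a)) = 0 := by
  simp [ha]

lemma arccos_sub_mul_div_add_one {a : ℝ} (ha : 1 + a ≠ 0) :
    arccos ((a - (2 * a + 1) * 1) / (1 + a)) = π := by
  rw [show (a - (2 * a + 1) * 1) / (1 + a) = -1 by field_simp; ring, arccos_neg_one]

lemma continuousOn_sqrt_mul_one_sub_div_pow {a : ℝ} (ha : 0 < a) (n : ℕ) :
    ContinuousOn (fun t => √(t * (1 - t)) / (t + a) ^ n) (Icc 0 1) := by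
  fun_prop (disch := (rintro t ⟨ht, -⟩; positivity))

lemma continuousOn_arccos_sub_mul_div_add {a : ℝ} (ha : 0 < a) :
    ContinuousOn (fun t => arccos ((a - (2 * a + 1) * t) / (t + a))) (Icc 0 1) := by
  fun_prop (disch := (rintro t ⟨ht, -⟩; positivity))

lemma intervalIntegrable_sqrt_mul_one_sub_div_pow {a : ℝ} (ha : 0 < a) (n : ℕ) :
    IntervalIntegrable (fun t => √(t * (1 - t)) / (t + a) ^ n) MeasureTheory.volume 0 1 :=
  (continuousOn_sqrt_mul_one_sub_div_pow ha n).intervalIntegrable_of_Icc zero_le_one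

theorem integral_sqrt_mul_one_sub_div_add {a : ℝ} (ha : 0 < a) :
    ∫ t in (0 : ℝ)..1, √(t * (1 - t)) / (t + a) = π * (a + 1 / 2 - √(a ^ 2 + a)) := by
  let F : ℝ → ℝ := fun t => √(t * (1 - t)) + (a + 1 / 2) * arccos (1 - 2 * t)
    - √(a ^ 2 + a) * arccos ((a - (2 * a + 1) * t) / (t + a))
  have hF : ∀ t ∈ Ioo (0 : ℝ) 1, HasDerivAt F (√(t * (1 - t)) / (t + a)) t := by
    rintro t ⟨h0, h1⟩
    refine (((hasDerivAt_sqrt_mul_one_sub h0 h1).fun_add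
      ((hasDerivAt_arccos_one_sub_two_mul h0 h1).const_mul _)).fun_sub
      ((hasDerivAt_arccos_sub_mul_div_add ha h0 h1).const_mul _)).congr_deriv ?_
    have hw2 := sq_sqrt (by nlinarith : 0 ≤ t * (1 - t))
    have hs2 := sq_sqrt (by positivity : 0 ≤ a ^ 2 + a)
    have hw : 0 < √(t * (1 - t)) := sqrt_pos.2 (by nlinarith)
    have hta : 0 < t + a := by linarith
    generalize √(t * (1 - t)) = w at *
    generalize √(a ^ 2 + a) = s at *
    field_simp
    linear_combination (-2) * hs2 - 2 * hw2
  have := continuousOn_arccos_sub_mul_div_add ha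
  rw [integral_eq_sub_of_hasDerivAt_of_le zero_le_one (by fun_prop) hF
    (by simpa using intervalIntegrable_sqrt_mul_one_sub_div_pow ha 1)]
  simp only [F, arccos_sub_mul_div_add_zero ha.ne', arccos_sub_mul_div_add_one (by positivity)]
  norm_num
  ring

theorem integral_sqrt_mul_one_sub_div_add_sq {a : ℝ} (ha : 0 < a) :
    ∫ t in (0 : ℝ)..1, √(t * (1 - t)) / (t + a) ^ 2
      = π * ((2 * a + 1) / (2 * √(a ^ 2 + a)) - 1) := by
  let F : ℝ → ℝ := fun t => (2 * a + 1) / (2 * √(a ^ 2 + a)) *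
    arccos ((a - (2 * a + 1) * t) / (t + a)) - √(t * (1 - t)) / (t + a) ^ 1 - arccos (1 - 2 * t)
  have hF : ∀ t ∈ Ioo (0 : ℝ) 1, HasDerivAt F (√(t * (1 - t)) / (t + a) ^ 2) t := by
    rintro t ⟨h0, h1⟩
    have hta : 0 < t + a := by linarith
    refine ((((hasDerivAt_arccos_sub_mul_div_add ha h0 h1).const_mul _).fun_sub
      (hasDerivAt_sqrt_mul_one_sub_div_pow 1 h0 h1 hta.ne')).fun_sub
      (hasDerivAt_arccos_one_sub_two_mul h0 h1)).congr_deriv ?_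
    have hw2 := sq_sqrt (by nlinarith : 0 ≤ t * (1 - t))
    have hw : 0 < √(t * (1 - t)) := sqrt_pos.2 (by nlinarith)
    have hs : 0 < √(a ^ 2 + a) := sqrt_pos.2 (by positivity)
    generalize √(t * (1 - t)) = w at *
    rw [← hw2]
    field_simp
    ring
  have := continuousOn_arccos_sub_mul_div_add ha
  have := continuousOn_sqrt_mul_one_sub_div_pow ha 1
  rw [integral_eq_sub_of_hasDerivAt_of_le zero_le_one (by fun_prop) hF
    (intervalIntegrable_sqrt_mul_one_sub_div_pow ha 2)]
  simp only [F, arccos_sub_mul_div_add_zero ha.ne', arccos_sub_mul_div_add_one (by positivity)]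
  norm_num
  ring

theorem integral_sqrt_mul_one_sub_div_add_pow_three {a : ℝ} (ha : 0 < a) :
    ∫ t in (0 : ℝ)..1, √(t * (1 - t)) / (t + a) ^ 3
      = π / (8 * (a ^ 2 + a) * √(a ^ 2 + a)) := by
  let F : ℝ → ℝ := fun t => 1 / (8 * (a ^ 2 + a) * √(a ^ 2 + a)) *
    arccos ((a - (2 * a + 1) * t) / (t + a))
      + (2 * a + 1) / (4 * (a ^ 2 + a)) * (√(t * (1 - t)) / (t + a) ^ 1)
      - 1 / 2 * (√(t * (1 - t)) / (t + a) ^ 2)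
  have hF : ∀ t ∈ Ioo (0 : ℝ) 1, HasDerivAt F (√(t * (1 - t)) / (t + a) ^ 3) t := by
    rintro t ⟨h0, h1⟩
    have hta : 0 < t + a := by linarith
    refine ((((hasDerivAt_arccos_sub_mul_div_add ha h0 h1).const_mul _).fun_add
      ((hasDerivAt_sqrt_mul_one_sub_div_pow 1 h0 h1 hta.ne').const_mul _)).fun_sub
      ((hasDerivAt_sqrt_mul_one_sub_div_pow 2 h0 h1 hta.ne').const_mul _)).congr_deriv ?_
    have hw2 := sq_sqrt (by nlinarith : 0 ≤ t * (1 - t))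
    have hw : 0 < √(t * (1 - t)) := sqrt_pos.2 (by nlinarith)
    have hs : 0 < √(a ^ 2 + a) := sqrt_pos.2 (by positivity)
    generalize √(t * (1 - t)) = w at *
    field_simp
    rw [hw2]
    ring
  have := continuousOn_arccos_sub_mul_div_add ha
  have := continuousOn_sqrt_mul_one_sub_div_pow ha 1
  have := continuousOn_sqrt_mul_one_sub_div_pow ha 2
  rw [integral_eq_sub_of_hasDerivAt_of_le zero_le_one (by fun_prop) hF
    (intervalIntegrable_sqrt_mul_one_sub_div_pow ha 3)]
  simp only [F, arccos_sub_mul_div_add_zero ha.ne', arccos_sub_mul_div_add_one (by positivity)]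
  have hs : 0 < √(a ^ 2 + a) := sqrt_pos.2 (by positivity)
  norm_num
  field_simp

lemma div_add_sq_mul_add_eq {x b c : ℝ} (y : ℝ) (hb : x + b ≠ 0) (hc : x + c ≠ 0)
    (hbc : b ≠ c) :
    y / ((x + b) ^ 2 * (x + c)) = 1 / (c - b) * (y / (x + b) ^ 2)
      - 1 / (c - b) ^ 2 * (y / (x + b)) + 1 / (c - b) ^ 2 * (y / (x + c)) := by
  have : c - b ≠ 0 := sub_ne_zero.2 hbc.symm
  field_simp
  ring

theorem integral_sqrt_mul_one_sub_div_add_sq_mul_add {b c : ℝ} (hb : 0 < b) (hc : 0 < c)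
    (hbc : b ≠ c) :
    ∫ t in (0 : ℝ)..1, √(t * (1 - t)) / ((t + b) ^ 2 * (t + c))
      = π * (b + c + 2 * b * c - 2 * √(b ^ 2 + b) * √(c ^ 2 + c))
          / (2 * √(b ^ 2 + b) * (c - b) ^ 2) := by
  have hint1 : ∀ {a : ℝ}, 0 < a →
      IntervalIntegrable (fun t => √(t * (1 - t)) / (t + a)) MeasureTheory.volume 0 1 := by
    intro a ha
    simpa using intervalIntegrable_sqrt_mul_one_sub_div_pow ha 1
  have hint2 := intervalIntegrable_sqrt_mul_one_sub_div_pow hb 2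
  have hpf : EqOn (fun t => √(t * (1 - t)) / ((t + b) ^ 2 * (t + c)))
      (fun t => 1 / (c - b) * (√(t * (1 - t)) / (t + b) ^ 2)
        - 1 / (c - b) ^ 2 * (√(t * (1 - t)) / (t + b))
        + 1 / (c - b) ^ 2 * (√(t * (1 - t)) / (t + c)))
      (uIcc 0 1) := by
    intro t ht
    rw [uIcc_of_le zero_le_one] at ht
    exact div_add_sq_mul_add_eq _ (by linarith [ht.1]) (by linarith [ht.1]) hbc
  rw [integral_congr hpf, integral_add ((hint2.const_mul _).sub ((hint1 hb).const_mul _))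
      ((hint1 hc).const_mul _), integral_sub (hint2.const_mul _) ((hint1 hb).const_mul _),
    integral_const_mul, integral_const_mul, integral_const_mul,
    integral_sqrt_mul_one_sub_div_add_sq hb, integral_sqrt_mul_one_sub_div_add hb,
    integral_sqrt_mul_one_sub_div_add hc]
  have hsb2 := sq_sqrt (by positivity : 0 ≤ b ^ 2 + b)
  have hsb : 0 < √(b ^ 2 + b) := sqrt_pos.2 (by positivity)
  have : c - b ≠ 0 := sub_ne_zero.2 hbc.symm
  generalize √(b ^ 2 + b) = sb at *
  generalize √(c ^ 2 + c) = sc at *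
  field_simp
  linear_combination 2 * hsb2

/-- `∫_0^1 √(t(1-t)) / ((t+b)²(t+c)) dt
  = π / (2√(b²+b)((b+c+2bc) + 2√((b+1)(c+1)bc)))` for `b, c > 0`. -/
theorem integral_sqrt_mul_one_sub_div_sq_linear (b c : ℝ) (hb : 0 < b) (hc : 0 < c) :
    ∫ t in (0 : ℝ)..1, Real.sqrt (t * (1 - t)) / ((t + b) ^ 2 * (t + c))
      = π / (2 * Real.sqrt (b ^ 2 + b) *
          ((b + c + 2 * b * c) + 2 * Real.sqrt ((b + 1) * (c + 1) * b * c))) := by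
  rw [show (b + 1) * (c + 1) * b * c = (b ^ 2 + b) * (c ^ 2 + c) by ring,
    sqrt_mul (by positivity)]
  have hsb : 0 < √(b ^ 2 + b) := sqrt_pos.2 (by positivity)
  have hsb2 := sq_sqrt (by positivity : 0 ≤ b ^ 2 + b)
  rcases eq_or_ne b c with rfl | hbc
  · simp_rw [← pow_succ, integral_sqrt_mul_one_sub_div_add_pow_three hb]
    generalize √(b ^ 2 + b) = s at *
    field_simp
    linear_combination 4 * hsb2
  rw [integral_sqrt_mul_one_sub_div_add_sq_mul_add hb hc hbc]
  have hsc2 := sq_sqrt (by positivity : 0 ≤ c ^ 2 + c)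
  generalize √(b ^ 2 + b) = sb at *
  generalize √(c ^ 2 + c) = sc at *
  have hconj : (b + c + 2 * b * c - 2 * sb * sc) * (b + c + 2 * b * c + 2 * (sb * sc))
      = (c - b) ^ 2 := by
    linear_combination (-4) * (c ^ 2 + c) * hsb2 - 4 * sb ^ 2 * hsc2
  have hminus : b + c + 2 * b * c - 2 * sb * sc ≠ 0 := by
    intro h
    rw [h, zero_mul, eq_comm, sq_eq_zero_iff, sub_eq_zero] at hconj
    exact hbc hconj.symm
  rw [← hconj, mul_comm (b + c + 2 * b * c - 2 * sb * sc), ← mul_assoc,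
    mul_div_mul_right _ _ hminus]
end

section
/- Lower spectral bound for the regularized Gram matrix: suppose Z_< ∈ R^{m×N₁} satisfies ‖Z_<ᵀZ_< − I_{N₁}‖_op ≤ 1/4, Z_r ∈ R^{m×N₂} satisfies ‖Z_r‖_op ≤ C, and Λ^{-1} is a diagonal positive semidefinite (N₁+N₂)×(N₁+N₂) matrix whose last N₂ diagonal entries are all ≥ c > 0. Then with Z = [Z_<, Z_r], the matrix D = Λ^{-1} + ZᵀZ satisfies D ⪰ λ₁ I for some λ₁ > 0 depending only on c and C. -/
/-!
Write `x = (u, v)` along the column blocks. The quadratic form of `D` is at least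
`c‖v‖² + ‖Z_< u + Z_r v‖²`, where `‖Z_< u‖² ≥ (3/4)‖u‖²` and `‖Z_r v‖ ≤ C‖v‖`. Since
`‖a + b‖² ≥ t (‖a‖²/2 - ‖b‖²)` for every `t ∈ [0, 1]`, the choice `t = c / (c + 2C²)` pays for
the cross term with half of the regularization on `v`, so `D ⪰ min (c/2, 3c / (8(c + 2C²))) I`.
-/

open Matrix
open scoped Matrix.Norms.L2Operator

noncomputable def gramLowerBound (κ c C : ℝ) : ℝ :=
  min (c / 2) (κ / 2 * (c / (c + 2 * C ^ 2)))

lemma gramLowerBound_pos {κ c : ℝ} (hκ : 0 < κ) (hc : 0 < c) (C : ℝ) :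
    0 < gramLowerBound κ c C :=
  lt_min (by positivity) (by positivity)

lemma half_sq_sub_sq_le_norm_add_sq {E : Type*} [SeminormedAddCommGroup E] (a b : E) :
    ‖a‖ ^ 2 / 2 - ‖b‖ ^ 2 ≤ ‖a + b‖ ^ 2 := by
  have : ‖a‖ ≤ ‖a + b‖ + ‖b‖ := by simpa using norm_sub_le (a + b) b
  nlinarith [norm_nonneg a, norm_nonneg b, sq_nonneg (‖a + b‖ - ‖b‖)]

lemma gramLowerBound_mul_le {E F₁ F₂ : Type*} [SeminormedAddCommGroup E]
    [SeminormedAddCommGroup F₁] [SeminormedAddCommGroup F₂] {κ c C : ℝ} (hc : 0 < c)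
    {a b : E} {u : F₁} {v : F₂} (ha : κ * ‖u‖ ^ 2 ≤ ‖a‖ ^ 2) (hb : ‖b‖ ≤ C * ‖v‖) :
    gramLowerBound κ c C * (‖u‖ ^ 2 + ‖v‖ ^ 2) ≤ c * ‖v‖ ^ 2 + ‖a + b‖ ^ 2 := by
  set t := c / (c + 2 * C ^ 2)
  have ht : 0 ≤ t := by positivity
  have ht1 : t ≤ 1 := div_le_one_of_le₀ (by nlinarith) (by positivity)
  have htC : 2 * C ^ 2 * t ≤ c := by
    rw [← mul_div_assoc, div_le_iff₀ (by positivity)]; nlinarith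
  have hb2 : ‖b‖ ^ 2 ≤ C ^ 2 * ‖v‖ ^ 2 := by nlinarith [norm_nonneg b, norm_nonneg v]
  have hab : t * (‖a‖ ^ 2 / 2 - ‖b‖ ^ 2) ≤ ‖a + b‖ ^ 2 := by
    nlinarith [half_sq_sub_sq_le_norm_add_sq a b, sq_nonneg ‖a + b‖]
  have hlam₁ : gramLowerBound κ c C ≤ c / 2 := min_le_left _ _
  have hlam₂ : gramLowerBound κ c C ≤ κ / 2 * t := min_le_right _ _
  nlinarith [mul_le_mul_of_nonneg_right hlam₁ (sq_nonneg ‖v‖),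
    mul_le_mul_of_nonneg_right hlam₂ (sq_nonneg ‖u‖), mul_le_mul_of_nonneg_left hb2 ht,
    mul_le_mul_of_nonneg_right htC (sq_nonneg ‖v‖)]

section Quadratic

variable {m n : Type*} [Fintype m] [Fintype n]

lemma dotProduct_self_eq_norm_toLp_sq (x : n → ℝ) : x ⬝ᵥ x = ‖WithLp.toLp 2 x‖ ^ 2 := by
  rw [← real_inner_self_eq_norm_sq, EuclideanSpace.inner_toLp_toLp, star_trivial]

lemma dotProduct_transpose_mul_self_mulVec (A : Matrix m n ℝ) (x : n → ℝ) :
    x ⬝ᵥ ((Aᵀ * A) *ᵥ x) = ‖WithLp.toLp 2 (A *ᵥ x)‖ ^ 2 := by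
  rw [← mulVec_mulVec, dotProduct_mulVec, vecMul_transpose, dotProduct_self_eq_norm_toLp_sq]

variable [DecidableEq n]

lemma norm_toLp_mulVec_le (A : Matrix m n ℝ) (x : n → ℝ) :
    ‖WithLp.toLp 2 (A *ᵥ x)‖ ≤ ‖A‖ * ‖WithLp.toLp 2 x‖ :=
  A.l2_opNorm_mulVec (WithLp.toLp 2 x)

lemma abs_dotProduct_mulVec_le (M : Matrix n n ℝ) (x : n → ℝ) :
    |x ⬝ᵥ (M *ᵥ x)| ≤ ‖M‖ * ‖WithLp.toLp 2 x‖ ^ 2 := by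
  calc |x ⬝ᵥ (M *ᵥ x)| = |inner ℝ (WithLp.toLp 2 (M *ᵥ x)) (WithLp.toLp 2 x)| := by
        rw [EuclideanSpace.inner_toLp_toLp, star_trivial]
    _ ≤ ‖WithLp.toLp 2 (M *ᵥ x)‖ * ‖WithLp.toLp 2 x‖ := abs_real_inner_le_norm _ _
    _ ≤ ‖M‖ * ‖WithLp.toLp 2 x‖ * ‖WithLp.toLp 2 x‖ := by
        gcongr; exact norm_toLp_mulVec_le M x
    _ = ‖M‖ * ‖WithLp.toLp 2 x‖ ^ 2 := by ring

lemma one_sub_mul_norm_sq_le_norm_mulVec_sq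
    {A : Matrix m n ℝ} {δ : ℝ} (hA : ‖Aᵀ * A - 1‖ ≤ δ) (x : n → ℝ) :
    (1 - δ) * ‖WithLp.toLp 2 x‖ ^ 2 ≤ ‖WithLp.toLp 2 (A *ᵥ x)‖ ^ 2 := by
  have hsplit :
      x ⬝ᵥ ((Aᵀ * A - 1) *ᵥ x) = ‖WithLp.toLp 2 (A *ᵥ x)‖ ^ 2 - ‖WithLp.toLp 2 x‖ ^ 2 := by
    rw [sub_mulVec, dotProduct_sub, one_mulVec, dotProduct_transpose_mul_self_mulVec,
      dotProduct_self_eq_norm_toLp_sq]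
  have := neg_le_of_abs_le (abs_dotProduct_mulVec_le (Aᵀ * A - 1) x)
  nlinarith [mul_le_mul_of_nonneg_right hA (sq_nonneg ‖WithLp.toLp 2 x‖)]

end Quadratic

lemma Matrix.IsHermitian.posSemidef_sub_smul_one {n : Type*} [Fintype n] [DecidableEq n]
    {M : Matrix n n ℝ} (hM : M.IsHermitian) {lam : ℝ}
    (h : ∀ x : n → ℝ, lam * ‖WithLp.toLp 2 x‖ ^ 2 ≤ x ⬝ᵥ (M *ᵥ x)) :
    (M - lam • (1 : Matrix n n ℝ)).PosSemidef := by
  refine .of_dotProduct_mulVec_nonneg (hM.sub (isHermitian_one.smul (.all lam))) fun x => ?_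
  rw [star_trivial, sub_mulVec, dotProduct_sub, smul_mulVec, one_mulVec, dotProduct_smul,
    smul_eq_mul, dotProduct_self_eq_norm_toLp_sq]
  linarith [h x]

section SumType

variable {ι₁ ι₂ : Type*} [Fintype ι₁] [Fintype ι₂]

lemma norm_toLp_sq_eq_add (x : ι₁ ⊕ ι₂ → ℝ) :
    ‖WithLp.toLp 2 x‖ ^ 2 =
      ‖WithLp.toLp 2 (x ∘ Sum.inl)‖ ^ 2 + ‖WithLp.toLp 2 (x ∘ Sum.inr)‖ ^ 2 := by
  simp only [EuclideanSpace.real_norm_sq_eq, Fintype.sum_sum_type, Function.comp_apply]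

lemma mul_norm_toLp_sq_le_dotProduct_mulVec [DecidableEq ι₁] [DecidableEq ι₂]
    {Λ : Matrix (ι₁ ⊕ ι₂) (ι₁ ⊕ ι₂) ℝ} (hdiag : Λ.IsDiag) (hΛ : Λ.PosSemidef) {c : ℝ}
    (hc : ∀ j, c ≤ Λ (Sum.inr j) (Sum.inr j)) (x : ι₁ ⊕ ι₂ → ℝ) :
    c * ‖WithLp.toLp 2 (x ∘ Sum.inr)‖ ^ 2 ≤ x ⬝ᵥ (Λ *ᵥ x) := by
  rw [← hdiag.diagonal_diag]
  simp only [EuclideanSpace.real_norm_sq_eq, dotProduct, mulVec_diagonal, Fintype.sum_sum_type,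
    Finset.mul_sum, Function.comp_apply, diag_apply]
  have hinl : 0 ≤ ∑ i : ι₁, x (Sum.inl i) * (Λ (Sum.inl i) (Sum.inl i) * x (Sum.inl i)) :=
    Finset.sum_nonneg fun i _ => by
      nlinarith [hΛ.diag_nonneg (i := Sum.inl i), sq_nonneg (x (Sum.inl i))]
  have hinr : ∑ j : ι₂, c * x (Sum.inr j) ^ 2
      ≤ ∑ j : ι₂, x (Sum.inr j) * (Λ (Sum.inr j) (Sum.inr j) * x (Sum.inr j)) :=
    Finset.sum_le_sum fun j _ => by nlinarith [hc j, sq_nonneg (x (Sum.inr j))]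
  linarith

end SumType

theorem regularized_gram_lower_bound_general (c C : ℝ) (hc : 0 < c) :
    ∃ lam : ℝ, 0 < lam ∧
      ∀ (m N₁ N₂ : ℕ) (Zlow : Matrix (Fin m) (Fin N₁) ℝ) (Zr : Matrix (Fin m) (Fin N₂) ℝ)
        (Λinv : Matrix (Fin N₁ ⊕ Fin N₂) (Fin N₁ ⊕ Fin N₂) ℝ),
        ‖Zlowᵀ * Zlow - 1‖ ≤ 1 / 4 → ‖Zr‖ ≤ C →
        Λinv.IsDiag → Λinv.PosSemidef → (∀ j : Fin N₂, c ≤ Λinv (Sum.inr j) (Sum.inr j)) →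
        (Λinv + (Matrix.fromCols Zlow Zr)ᵀ * Matrix.fromCols Zlow Zr
          - lam • (1 : Matrix (Fin N₁ ⊕ Fin N₂) (Fin N₁ ⊕ Fin N₂) ℝ)).PosSemidef := by
  refine ⟨gramLowerBound (1 - 1 / 4) c C, gramLowerBound_pos (by norm_num) hc C, ?_⟩
  intro m N₁ N₂ Zlow Zr Λinv hZlow hZr hdiag hΛ hcΛ
  set Z := Matrix.fromCols Zlow Zr
  have hD : (Λinv + Zᵀ * Z).IsHermitian :=
    hΛ.isHermitian.add (by simpa using isHermitian_conjTranspose_mul_self Z)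
  refine hD.posSemidef_sub_smul_one fun x => ?_
  set u := x ∘ Sum.inl
  set v := x ∘ Sum.inr
  have hZx : Z *ᵥ x = Zlow *ᵥ u + Zr *ᵥ v := fromCols_mulVec Zlow Zr x
  have hu := one_sub_mul_norm_sq_le_norm_mulVec_sq hZlow u
  have hv : ‖WithLp.toLp 2 (Zr *ᵥ v)‖ ≤ C * ‖WithLp.toLp 2 v‖ :=
    (norm_toLp_mulVec_le Zr v).trans (by gcongr)
  calc gramLowerBound (1 - 1 / 4) c C * ‖WithLp.toLp 2 x‖ ^ 2
      ≤ c * ‖WithLp.toLp 2 v‖ ^ 2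
          + ‖WithLp.toLp 2 (Zlow *ᵥ u) + WithLp.toLp 2 (Zr *ᵥ v)‖ ^ 2 := by
        rw [norm_toLp_sq_eq_add]; exact gramLowerBound_mul_le hc hu hv
    _ ≤ x ⬝ᵥ (Λinv *ᵥ x) + x ⬝ᵥ ((Zᵀ * Z) *ᵥ x) := by
        rw [dotProduct_transpose_mul_self_mulVec, hZx, WithLp.toLp_add]
        gcongr
        exact mul_norm_toLp_sq_le_dotProduct_mulVec hdiag hΛ hcΛ x
    _ = x ⬝ᵥ ((Λinv + Zᵀ * Z) *ᵥ x) := by rw [add_mulVec, dotProduct_add]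

/-- Lower spectral bound for the regularized Gram matrix: if `‖Z_<ᵀZ_< − I‖ ≤ 1/4`,
`‖Z_r‖ ≤ C`, and `Λ⁻¹` is diagonal PSD with its last `N₂` diagonal entries ≥ `c > 0`,
then `D = Λ⁻¹ + ZᵀZ ⪰ λ₁ I` for some `λ₁ > 0` depending only on `c` and `C`. -/
theorem regularized_gram_lower_bound (c C : ℝ) (hc : 0 < c) (hC : 0 < C) :
    ∃ lam : ℝ, 0 < lam ∧
      ∀ (m N₁ N₂ : ℕ) (Zlow : Matrix (Fin m) (Fin N₁) ℝ) (Zr : Matrix (Fin m) (Fin N₂) ℝ)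
        (Λinv : Matrix (Fin N₁ ⊕ Fin N₂) (Fin N₁ ⊕ Fin N₂) ℝ),
        ‖Zlowᵀ * Zlow - 1‖ ≤ 1 / 4 → ‖Zr‖ ≤ C →
        Λinv.IsDiag → Λinv.PosSemidef → (∀ j : Fin N₂, c ≤ Λinv (Sum.inr j) (Sum.inr j)) →
        (Λinv + (Matrix.fromCols Zlow Zr)ᵀ * Matrix.fromCols Zlow Zr
          - lam • (1 : Matrix (Fin N₁ ⊕ Fin N₂) (Fin N₁ ⊕ Fin N₂) ℝ)).PosSemidef :=
  regularized_gram_lower_bound_general c C hc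
end
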